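/- (Theorem 2, part 1: spinor transformation of the first equation.) Let D, D* ⊆ ℂ be open, let z : D* → D be holomorphic on D* with z'(ζ) ≠ 0 for all ζ ∈ D*, and let s : D* → ℂ be a holomorphic branch of the square root of z', i.e. s is holomorphic on D* with s(ζ)² = z'(ζ) for all ζ ∈ D*. Let u : ℂ → ℂ and let ψ be real-differentiable on D with ∂_z̄ ψ = u·conj(ψ) on D. Define u*(ζ) = u(z(ζ))·|z'(ζ)| and ψ*(ζ) = ψ(z(ζ))·s(ζ) for ζ ∈ D*. Then ∂_ζ̄ ψ* = u*·conj(ψ*) on D*. -/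

import Mathlib

open Complex

/-- The Wirtinger derivative ∂_z̄ f(z) = (1/2)((fderiv ℝ f z) 1 + i·((fderiv ℝ f z) i)). -/
noncomputable def dzbar (f : ℂ → ℂ) (z : ℂ) : ℂ :=
  (1 / 2 : ℂ) * ((fderiv ℝ f z) 1 + Complex.I * (fderiv ℝ f z) Complex.I)

/-- The Wirtinger derivative ∂_z f(z) = (1/2)((fderiv ℝ f z) 1 − i·((fderiv ℝ f z) i)). -/
noncomputable def dz (f : ℂ → ℂ) (z : ℂ) : ℂ :=
  (1 / 2 : ℂ) * ((fderiv ℝ f z) 1 - Complex.I * (fderiv ℝ f z) Complex.I)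

/-!
`∂_ζ̄` obeys the Leibniz rule and kills the holomorphic factor `s`, and for holomorphic `z` the
chain rule reads `∂_ζ̄ (ψ ∘ z) = conj z' · (∂_z̄ ψ) ∘ z`. Hence `∂_ζ̄ ψ* = conj z' · u(z) · conj ψ(z) · s`,
and `conj z' · s = conj (s²) · s = |s|² · conj s = |z'| · conj s`.
-/

/-- Writing an `ℝ`-linear map as `c ↦ a c + b conj c`, the combination on the left sees only `b`. -/
theorem ContinuousLinearMap.apply_add_I_mul_apply_I_mul (A : ℂ →L[ℝ] ℂ) (c : ℂ) :
    A c + I * A (I * c) = (starRingEnd ℂ) c * (A 1 + I * A I) := by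
  have hA : ∀ w : ℂ, A w = (w.re : ℂ) * A 1 + (w.im : ℂ) * A I := by
    intro w
    have hw : w = w.re • (1 : ℂ) + w.im • I := by simp [real_smul]
    rw [hw, map_add, map_smul, map_smul]
    simp [real_smul]
  have hconj : (starRingEnd ℂ) c = c.re - c.im * I := by apply Complex.ext <;> simp
  rw [hA c, hA (I * c), hconj]
  simp only [mul_re, mul_im, I_re, I_im]
  push_cast
  linear_combination ((c.im : ℂ) * A I) * I_sq

theorem dzbar_mul {f g : ℂ → ℂ} {x : ℂ} (hf : DifferentiableAt ℝ f x)
    (hg : DifferentiableAt ℝ g x) :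
    dzbar (fun y => f y * g y) x = dzbar f x * g x + f x * dzbar g x := by
  simp only [dzbar, fderiv_fun_mul hf hg, add_apply, smul_apply, smul_eq_mul]
  ring

theorem dzbar_eq_zero_of_differentiableAt {f : ℂ → ℂ} {x : ℂ} (hf : DifferentiableAt ℂ f x) :
    dzbar f x = 0 := by
  have hI : fderiv ℂ f x I = I * fderiv ℂ f x 1 := by
    rw [← smul_eq_mul, ← map_smul, smul_eq_mul, mul_one]
  simp only [dzbar, hf.fderiv_restrictScalars ℝ, ContinuousLinearMap.coe_restrictScalars', hI]
  linear_combination (1 / 2 * fderiv ℂ f x 1) * I_mul_I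

theorem dzbar_comp_of_hasDerivAt {f g : ℂ → ℂ} {g' x : ℂ} (hf : DifferentiableAt ℝ f (g x))
    (hg : HasDerivAt g g' x) :
    dzbar (fun y => f (g y)) x = (starRingEnd ℂ) g' * dzbar f (g x) := by
  have hcomp := (hf.hasFDerivAt.comp x (hg.hasFDerivAt.restrictScalars ℝ)).fderiv
  simp only [dzbar, Function.comp_def] at hcomp ⊢
  rw [hcomp]
  simp only [ContinuousLinearMap.comp_apply, ContinuousLinearMap.coe_restrictScalars',
    ContinuousLinearMap.toSpanSingleton_apply, smul_eq_mul, one_mul]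
  rw [ContinuousLinearMap.apply_add_I_mul_apply_I_mul]
  ring

theorem conj_sq_mul_self (s : ℂ) :
    (starRingEnd ℂ) (s ^ 2) * s = (‖s ^ 2‖ : ℂ) * (starRingEnd ℂ) s := by
  rw [map_pow, norm_pow, ofReal_pow, ← mul_conj', sq]
  ring

theorem statement8_general (D Dstar : Set ℂ)
    (z z' s : ℂ → ℂ) (hmaps : Set.MapsTo z Dstar D)
    (hz : ∀ ζ ∈ Dstar, HasDerivAt z (z' ζ) ζ)
    (hs : ∀ ζ ∈ Dstar, DifferentiableAt ℂ s ζ)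
    (hs2 : ∀ ζ ∈ Dstar, s ζ ^ 2 = z' ζ)
    (u ψ : ℂ → ℂ)
    (hψ : ∀ w ∈ D, DifferentiableAt ℝ ψ w)
    (heq : ∀ w ∈ D, dzbar ψ w = u w * (starRingEnd ℂ) (ψ w)) :
    ∀ ζ ∈ Dstar,
      dzbar (fun ξ => ψ (z ξ) * s ξ) ζ
        = (u (z ζ) * (‖z' ζ‖ : ℂ))
            * (starRingEnd ℂ) (ψ (z ζ) * s ζ) := by
  intro ζ hζ
  have hψz := hψ (z ζ) (hmaps hζ)
  have hψz_diff : DifferentiableAt ℝ (fun ξ => ψ (z ξ)) ζ :=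
    hψz.comp ζ ((hz ζ hζ).differentiableAt.restrictScalars ℝ)
  rw [dzbar_mul hψz_diff ((hs ζ hζ).restrictScalars ℝ), dzbar_eq_zero_of_differentiableAt (hs ζ hζ),
    dzbar_comp_of_hasDerivAt hψz (hz ζ hζ), heq (z ζ) (hmaps hζ), ← hs2 ζ hζ, map_mul]
  linear_combination (u (z ζ) * (starRingEnd ℂ) (ψ (z ζ))) * conj_sq_mul_self (s ζ)

/-- Theorem 2, part 1: if ∂_z̄ ψ = u·conj ψ on D, then
ψ*(ζ) = ψ(z(ζ))·s(ζ) satisfies ∂_ζ̄ ψ* = u*·conj ψ* with u*(ζ) = u(z(ζ))·|z'(ζ)|. -/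
theorem statement8 (D Dstar : Set ℂ) (hD : IsOpen D) (hDstar : IsOpen Dstar)
    (z z' s : ℂ → ℂ) (hmaps : Set.MapsTo z Dstar D)
    (hz : ∀ ζ ∈ Dstar, HasDerivAt z (z' ζ) ζ)
    (hz' : ∀ ζ ∈ Dstar, z' ζ ≠ 0)
    (hs : ∀ ζ ∈ Dstar, DifferentiableAt ℂ s ζ)
    (hs2 : ∀ ζ ∈ Dstar, s ζ ^ 2 = z' ζ)
    (u ψ : ℂ → ℂ)
    (hψ : ∀ w ∈ D, DifferentiableAt ℝ ψ w)
    (heq : ∀ w ∈ D, dzbar ψ w = u w * (starRingEnd ℂ) (ψ w)) :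
    ∀ ζ ∈ Dstar,
      dzbar (fun ξ => ψ (z ξ) * s ξ) ζ
        = (u (z ζ) * (‖z' ζ‖ : ℂ))
            * (starRingEnd ℂ) (ψ (z ζ) * s ζ) :=
  statement8_general D Dstar z z' s hmaps hz hs hs2 u ψ hψ heq
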